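/- Let (d_n)_{n≥0} be a real-valued martingale difference sequence on a probability space (Ω', 𝒜', P') with respect to an increasing filtration (𝒜_n), with 𝒜_0 trivial (so d_0 is constant), such that |d_n| ≤ 1 almost surely for every n. Let (ε_n)_{n≥1} be an i.i.d. sequence of random variables on a probability space (Ω, P) with P(ε_n = 1) = P(ε_n = −1) = 1/2. Then for any Banach space B, any k ≥ 1, and any x₀, x₁, …, x_k ∈ B, ∫ ‖d_0 x_0 + Σ_{n=1}^k d_n x_n‖ dP' ≤ ∫ ‖d_0 x_0 + Σ_{n=1}^k ε_n x_n‖ dP. -/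

import Mathlib

/-!
The differences are replaced by independent signs one at a time, from the last one down. For a
convex Lipschitz `G`, an `𝒜ₙ₋₁`-measurable `w` and `|dₙ| ≤ 1`, convexity gives pointwise
`G (w + dₙ z) ≤ ½ (G (w + z) + G (w - z)) + dₙ · ½ (G (w + z) - G (w - z))`, and the last term
integrates to zero because `E[dₙ | 𝒜ₙ₋₁] = 0`. For a Rademacher variable independent of `w` the
same relation is an equality. The sign-average of a convex Lipschitz function is again convex and
Lipschitz, so starting from `G = ‖·‖` the steps can be iterated, and both sides of the inequality
end up compared with the average of `‖d₀ x₀ + ∑ ±xₙ‖` over all sign choices.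
-/

open MeasureTheory ProbabilityTheory Finset

section

variable {B : Type*} [NormedAddCommGroup B] {G : B → ℝ} {K : NNReal}

noncomputable def signAverage (z : B) (G : B → ℝ) (y : B) : ℝ := (G (y + z) + G (y - z)) / 2

noncomputable def signDiff (z : B) (G : B → ℝ) (y : B) : ℝ := (G (y + z) - G (y - z)) / 2

/-- `rademacherAverage z k G y` is the average of `G (y + ∑ n < k, ±z n)` over all `2 ^ k` sign
choices. -/
noncomputable def rademacherAverage (z : ℕ → B) : ℕ → (B → ℝ) → B → ℝ
  | 0, G => G
  | k + 1, G => rademacherAverage z k (signAverage (z k) G)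

theorem LipschitzWith.signAverage (hG : LipschitzWith K G) (z : B) :
    LipschitzWith K (signAverage z G) := by
  refine LipschitzWith.of_dist_le_mul fun y y' => ?_
  have h₁ := hG.dist_le_mul (y + z) (y' + z)
  have h₂ := hG.dist_le_mul (y - z) (y' - z)
  rw [dist_add_right] at h₁
  rw [dist_sub_right] at h₂
  rw [Real.dist_eq] at h₁ h₂ ⊢
  unfold _root_.signAverage
  rw [abs_le] at h₁ h₂ ⊢
  constructor <;> linarith [h₁.1, h₁.2, h₂.1, h₂.2]

theorem ConvexOn.signAverage [NormedSpace ℝ B] (hG : ConvexOn ℝ Set.univ G) (z : B) :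
    ConvexOn ℝ Set.univ (_root_.signAverage z G) := by
  refine ⟨convex_univ, fun x _ y _ a b ha hb hab => ?_⟩
  have hplus := hG.2 (Set.mem_univ (x + z)) (Set.mem_univ (y + z)) ha hb hab
  have hminus := hG.2 (Set.mem_univ (x - z)) (Set.mem_univ (y - z)) ha hb hab
  have hshift₁ : a • (x + z) + b • (y + z) = a • x + b • y + z := by
    linear_combination (norm := module) hab • z
  have hshift₂ : a • (x - z) + b • (y - z) = a • x + b • y - z := by
    linear_combination (norm := module) -(hab • z)
  rw [hshift₁, smul_eq_mul, smul_eq_mul] at hplus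
  rw [hshift₂, smul_eq_mul, smul_eq_mul] at hminus
  simp only [_root_.signAverage, smul_eq_mul]
  linarith

theorem LipschitzWith.norm_signDiff_le (hG : LipschitzWith K G) (z y : B) :
    ‖signDiff z G y‖ ≤ K * ‖z‖ := by
  have h := hG.norm_sub_le (y + z) (y - z)
  rw [add_sub_sub_cancel] at h
  rw [signDiff, norm_div, Real.norm_two]
  nlinarith [norm_add_le z z, K.coe_nonneg]

theorem LipschitzWith.continuous_signDiff (hG : LipschitzWith K G) (z : B) :
    Continuous (signDiff z G) := by
  have := hG.continuous
  unfold signDiff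
  fun_prop

theorem ConvexOn.apply_add_smul_le [NormedSpace ℝ B] (hG : ConvexOn ℝ Set.univ G) (v z : B)
    {t : ℝ} (ht : |t| ≤ 1) : G (v + t • z) ≤ _root_.signAverage z G v + signDiff z G v * t := by
  obtain ⟨ht₁, ht₂⟩ := abs_le.mp ht
  have h := hG.2 (Set.mem_univ (v + z)) (Set.mem_univ (v - z))
    (by linarith : 0 ≤ (1 + t) / 2) (by linarith : 0 ≤ (1 - t) / 2) (by ring)
  have hv : ((1 + t) / 2) • (v + z) + ((1 - t) / 2) • (v - z) = v + t • z := by module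
  rw [hv, smul_eq_mul, smul_eq_mul] at h
  unfold _root_.signAverage signDiff
  linarith

theorem apply_add_smul_eq_of_sign [NormedSpace ℝ B] (G : B → ℝ) (v z : B) {t : ℝ}
    (ht : t = 1 ∨ t = -1) :
    G (v + t • z) = signAverage z G v + signDiff z G v * t := by
  rcases ht with rfl | rfl <;> simp [signAverage, signDiff, ← sub_eq_add_neg] <;> ring

theorem LipschitzWith.integrable_comp {Ω : Type*} [MeasurableSpace Ω] {μ : Measure Ω}
    [IsFiniteMeasure μ] (hG : LipschitzWith K G) {w : Ω → B} (hw : Integrable w μ) :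
    Integrable (fun ω => G (w ω)) μ := by
  refine ((integrable_const ‖G 0‖).add (hw.norm.const_mul K)).mono'
    (hG.continuous.comp_aestronglyMeasurable hw.1) (ae_of_all _ fun ω => ?_)
  have h := hG.norm_sub_le (w ω) 0
  rw [sub_zero] at h
  simp only [Pi.add_apply]
  linarith [norm_le_insert' (G (w ω)) (G 0)]

section Integration

variable {Ω : Type*} {m : MeasurableSpace Ω} [mΩ : MeasurableSpace Ω] {μ : Measure Ω}

theorem integral_mul_eq_zero_of_condExp_eq_zero (hm : m ≤ mΩ) [SigmaFinite (μ.trim hm)]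
    {f g : Ω → ℝ} (hf : StronglyMeasurable[m] f) (hfg : Integrable (f * g) μ)
    (hg : Integrable g μ) (hcond : μ[g|m] =ᵐ[μ] 0) : ∫ ω, f ω * g ω ∂μ = 0 := by
  have hpull : μ[f * g|m] =ᵐ[μ] 0 := by
    filter_upwards [condExp_mul_of_stronglyMeasurable_left hf hfg hg, hcond] with ω h₁ h₂
    simp [h₁, h₂]
  rw [← integral_condExp hm]
  exact (integral_congr_ae hpull).trans (integral_zero Ω ℝ)

variable {w : Ω → B} {g : Ω → ℝ}

theorem integrable_signDiff_mul (hG : LipschitzWith K G) (hw : AEStronglyMeasurable w μ)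
    (hg : Integrable g μ) (z : B) : Integrable (fun ω => signDiff z G (w ω) * g ω) μ :=
  hg.bdd_mul ((hG.continuous_signDiff z).comp_aestronglyMeasurable hw)
    (ae_of_all _ fun ω => hG.norm_signDiff_le z (w ω))

variable [IsFiniteMeasure μ]

theorem integral_signAverage_add_signDiff_mul (hm : m ≤ mΩ) (hG : LipschitzWith K G)
    (hw : StronglyMeasurable[m] w) (hwi : Integrable w μ) (hg : Integrable g μ)
    (hcond : μ[g|m] =ᵐ[μ] 0) (z : B) :
    ∫ ω, (signAverage z G (w ω) + signDiff z G (w ω) * g ω) ∂μ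
      = ∫ ω, signAverage z G (w ω) ∂μ := by
  have hdiff := (hG.continuous_signDiff z).comp_stronglyMeasurable hw
  rw [integral_add ((hG.signAverage z).integrable_comp hwi)
    (integrable_signDiff_mul hG hwi.1 hg z),
    integral_mul_eq_zero_of_condExp_eq_zero hm hdiff (integrable_signDiff_mul hG hwi.1 hg z) hg
      hcond, add_zero]

theorem integral_comp_add_smul_le [NormedSpace ℝ B] (hm : m ≤ mΩ) (hGc : ConvexOn ℝ Set.univ G)
    (hG : LipschitzWith K G) (hw : StronglyMeasurable[m] w) (hwi : Integrable w μ)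
    (hg : Integrable g μ) (hg_le : ∀ᵐ ω ∂μ, |g ω| ≤ 1) (hcond : μ[g|m] =ᵐ[μ] 0) (z : B) :
    ∫ ω, G (w ω + g ω • z) ∂μ ≤ ∫ ω, signAverage z G (w ω) ∂μ := by
  rw [← integral_signAverage_add_signDiff_mul hm hG hw hwi hg hcond z]
  refine integral_mono_ae (hG.integrable_comp (hwi.add (hg.smul_const z)))
    (((hG.signAverage z).integrable_comp hwi).add (integrable_signDiff_mul hG hwi.1 hg z)) ?_
  filter_upwards [hg_le] with ω hω using hGc.apply_add_smul_le (w ω) z hω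

theorem integral_comp_add_smul_eq [NormedSpace ℝ B] (hm : m ≤ mΩ) (hG : LipschitzWith K G)
    (hw : StronglyMeasurable[m] w) (hwi : Integrable w μ) (hg : Integrable g μ)
    (hg_sign : ∀ᵐ ω ∂μ, g ω = 1 ∨ g ω = -1) (hcond : μ[g|m] =ᵐ[μ] 0) (z : B) :
    ∫ ω, G (w ω + g ω • z) ∂μ = ∫ ω, signAverage z G (w ω) ∂μ := by
  rw [← integral_signAverage_add_signDiff_mul hm hG hw hwi hg hcond z]
  exact integral_congr_ae (hg_sign.mono fun ω hω => apply_add_smul_eq_of_sign G (w ω) z hω)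

end Integration

def IsRademacher {Ω : Type*} [MeasurableSpace Ω] (μ : Measure Ω) (e : Ω → ℝ) : Prop :=
  μ {ω | e ω = 1} = 1 / 2 ∧ μ {ω | e ω = -1} = 1 / 2

namespace IsRademacher

variable {Ω : Type*} {m : MeasurableSpace Ω} [mΩ : MeasurableSpace Ω] {μ : Measure Ω}
  [IsProbabilityMeasure μ] {e : Ω → ℝ}

theorem ae_eq_one_or_eq_neg_one (he : Measurable e) (hrad : IsRademacher μ e) :
    ∀ᵐ ω ∂μ, e ω = 1 ∨ e ω = -1 := by
  have hdisj : Disjoint {ω | e ω = 1} {ω | e ω = -1} :=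
    Set.disjoint_left.mpr fun ω (h₁ : e ω = 1) (h₂ : e ω = -1) => by norm_num [h₁] at h₂
  have hmeas : MeasurableSet {ω | e ω = 1 ∨ e ω = -1} :=
    (he (measurableSet_singleton 1)).union (he (measurableSet_singleton (-1)))
  rw [ae_iff_measure_eq hmeas.nullMeasurableSet, Set.ofPred_or,
    measure_union hdisj (he (measurableSet_singleton (-1))), hrad.1, hrad.2, ENNReal.add_halves,
    measure_univ]

theorem integrable (he : Measurable e) (hrad : IsRademacher μ e) : Integrable e μ :=
  .of_bound he.aestronglyMeasurable 1 <| (hrad.ae_eq_one_or_eq_neg_one he).mono fun ω hω => by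
    rcases hω with h | h <;> simp [h]

theorem integral_eq_zero (he : Measurable e) (hrad : IsRademacher μ e) : ∫ ω, e ω ∂μ = 0 := by
  have hset : MeasurableSet {ω | e ω = 1} := he (measurableSet_singleton 1)
  have hind : e =ᵐ[μ] fun ω => 2 * Set.indicator {ω | e ω = 1} 1 ω - 1 := by
    filter_upwards [hrad.ae_eq_one_or_eq_neg_one he] with ω hω
    rcases hω with h | h <;> norm_num [h, Set.indicator]
  rw [integral_congr_ae hind, integral_sub ((integrable_indicator_iff hset).mpr
    (integrable_const 1).integrableOn |>.const_mul 2) (integrable_const 1),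
    integral_const_mul, integral_indicator_one hset, measureReal_def, hrad.1]
  norm_num

theorem condExp_eq_zero (hm : m ≤ mΩ) (he : Measurable e)
    (hrad : IsRademacher μ e) (hindep : Indep (MeasurableSpace.comap e inferInstance) m μ) :
    μ[e|m] =ᵐ[μ] 0 := by
  filter_upwards [condExp_indep_eq he.comap_le hm (comap_measurable e).stronglyMeasurable hindep]
    with ω hω
  rw [hω, hrad.integral_eq_zero he, Pi.zero_apply]

end IsRademacher

section Domination

variable {Ω : Type*} [mΩ : MeasurableSpace Ω] {μ : Measure Ω} [IsProbabilityMeasure μ]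
  [NormedSpace ℝ B]

theorem integral_comp_add_sum_smul_eq_rademacherAverage {e : ℕ → Ω → ℝ}
    (he : ∀ n, Measurable (e n)) (hindep : iIndepFun e μ) (hrad : ∀ n, IsRademacher μ (e n))
    (hG : LipschitzWith K G) (z : ℕ → B) (k : ℕ) (y : B) :
    ∫ ω, G (y + ∑ n ∈ range k, e n ω • z n) ∂μ = rademacherAverage z k G y := by
  induction k generalizing G with
  | zero => simp [rademacherAverage]
  | succ k ih =>
    let past (S : Set ℕ) := ⨆ j ∈ S, MeasurableSpace.comap (e j) inferInstance
    have hpast : past (Set.Iio k) ≤ mΩ := iSup₂_le fun j _ => (he j).comap_le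
    have hindep_k : Indep (MeasurableSpace.comap (e k) inferInstance) (past (Set.Iio k)) μ := by
      simpa [past] using indep_iSup_of_disjoint (fun j => (he j).comap_le)
        ((iIndepFun_iff_iIndep _ _ _).mp hindep) (S := {k}) (T := Set.Iio k) (by simp)
    have hmeas : StronglyMeasurable[past (Set.Iio k)]
        (fun ω => y + ∑ n ∈ range k, e n ω • z n) := by
      refine stronglyMeasurable_const.add (Finset.stronglyMeasurable_fun_sum _ fun n hn => ?_)
      have : MeasurableSpace.comap (e n) inferInstance ≤ past (Set.Iio k) :=
        le_iSup₂ (f := fun j (_ : j ∈ Set.Iio k) => MeasurableSpace.comap (e j) inferInstance) n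
          (mem_range.mp hn)
      exact (Measurable.of_comap_le this).stronglyMeasurable.smul_const _
    have hint : Integrable (fun ω => y + ∑ n ∈ range k, e n ω • z n) μ :=
      (integrable_const y).add
        (integrable_finsetSum _ fun n _ => ((hrad n).integrable (he n)).smul_const _)
    calc ∫ ω, G (y + ∑ n ∈ range (k + 1), e n ω • z n) ∂μ
        = ∫ ω, G ((y + ∑ n ∈ range k, e n ω • z n) + e k ω • z k) ∂μ := by
          simp_rw [sum_range_succ, add_assoc]
      _ = ∫ ω, signAverage (z k) G (y + ∑ n ∈ range k, e n ω • z n) ∂μ :=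
          integral_comp_add_smul_eq hpast hG hmeas hint ((hrad k).integrable (he k))
            ((hrad k).ae_eq_one_or_eq_neg_one (he k))
            ((hrad k).condExp_eq_zero hpast (he k) hindep_k) _
      _ = rademacherAverage z (k + 1) G y := ih (hG.signAverage _)

theorem integral_comp_sum_smul_le_rademacherAverage {d : ℕ → Ω → ℝ}
    {𝒜 : ℕ → MeasurableSpace Ω} (hmono : Monotone 𝒜) (hle : ∀ n, 𝒜 n ≤ mΩ)
    (hadapt : ∀ n, Measurable[𝒜 n] (d n)) (hmds : ∀ n, μ[d (n + 1)|𝒜 n] =ᵐ[μ] 0)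
    (hbdd : ∀ n, ∀ᵐ ω ∂μ, |d n ω| ≤ 1) (hGc : ConvexOn ℝ Set.univ G) (hG : LipschitzWith K G)
    (x : ℕ → B) (k : ℕ) :
    ∫ ω, G (d 0 ω • x 0 + ∑ n ∈ range k, d (n + 1) ω • x (n + 1)) ∂μ
      ≤ ∫ ω, rademacherAverage (fun n => x (n + 1)) k G (d 0 ω • x 0) ∂μ := by
  have hint (n : ℕ) : Integrable (d n) μ :=
    .of_bound ((hadapt n).mono (hle n) le_rfl).aestronglyMeasurable 1 (by simpa using hbdd n)
  induction k generalizing G with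
  | zero => simp [rademacherAverage]
  | succ k ih =>
    let S ω := d 0 ω • x 0 + ∑ n ∈ range k, d (n + 1) ω • x (n + 1)
    have hS : StronglyMeasurable[𝒜 k] S :=
      (((hadapt 0).mono (hmono k.zero_le) le_rfl).stronglyMeasurable.smul_const _).add
        (Finset.stronglyMeasurable_fun_sum _ fun n hn =>
          ((hadapt (n + 1)).mono (hmono (mem_range.mp hn)) le_rfl).stronglyMeasurable.smul_const _)
    have hSi : Integrable S μ :=
      ((hint 0).smul_const _).add (integrable_finsetSum _ fun n _ => (hint (n + 1)).smul_const _)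
    calc ∫ ω, G (d 0 ω • x 0 + ∑ n ∈ range (k + 1), d (n + 1) ω • x (n + 1)) ∂μ
        = ∫ ω, G (S ω + d (k + 1) ω • x (k + 1)) ∂μ := by
          simp_rw [S, sum_range_succ, add_assoc]
      _ ≤ ∫ ω, signAverage (x (k + 1)) G (S ω) ∂μ :=
          integral_comp_add_smul_le (hle k) hGc hG hS hSi (hint _) (hbdd _) (hmds k) _
      _ ≤ _ := ih (hGc.signAverage _) (hG.signAverage _)

end Domination

end

theorem mds_dominated_by_rademacher_general {Ω' : Type} [mΩ' : MeasurableSpace Ω'] (P' : Measure Ω')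
    [IsProbabilityMeasure P']
    {Ω : Type} [mΩ : MeasurableSpace Ω] (P : Measure Ω) [IsProbabilityMeasure P]
    (d : ℕ → Ω' → ℝ) (𝒜 : ℕ → MeasurableSpace Ω')
    (hmono : Monotone 𝒜) (hle : ∀ n, 𝒜 n ≤ mΩ')
    (hadapt : ∀ n, Measurable[𝒜 n] (d n))
    (hmds : ∀ n, P'[d (n + 1)|𝒜 n] =ᵐ[P'] 0)
    (hbdd : ∀ n, ∀ᵐ ω ∂P', |d n ω| ≤ 1)
    (ε : ℕ → Ω → ℝ) (hεmeas : ∀ n, 1 ≤ n → Measurable (ε n))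
    (hεindep : iIndepFun (fun n => ε (n + 1)) P)
    (hεdist : ∀ n, 1 ≤ n → P {ω | ε n ω = 1} = 1 / 2 ∧ P {ω | ε n ω = -1} = 1 / 2)
    (B : Type) [NormedAddCommGroup B] [NormedSpace ℝ B]
    (k : ℕ) (x : ℕ → B) :
    ∫ ω, ‖d 0 ω • x 0 + ∑ n ∈ Finset.Icc 1 k, d n ω • x n‖ ∂P'
      ≤ ∫ p, ‖d 0 p.1 • x 0 + ∑ n ∈ Finset.Icc 1 k, ε n p.2 • x n‖ ∂(P'.prod P) := by
  have hIcc (f : ℕ → B) : ∑ n ∈ Finset.Icc 1 k, f n = ∑ n ∈ range k, f (n + 1) := by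
    rw [range_eq_Ico, sum_Ico_add', Ico_add_one_right_eq_Icc]
  have he (n : ℕ) : Measurable (ε (n + 1)) := hεmeas _ n.succ_pos
  have hrad (n : ℕ) : IsRademacher P (ε (n + 1)) := hεdist _ n.succ_pos
  have hd₀ : Integrable (d 0) P' :=
    .of_bound ((hadapt 0).mono (hle 0) le_rfl).aestronglyMeasurable 1 (by simpa using hbdd 0)
  have hsum : Integrable (fun ω => ∑ n ∈ range k, ε (n + 1) ω • x (n + 1)) P :=
    integrable_finsetSum _ fun n _ => ((hrad n).integrable (he n)).smul_const _
  have hprod : Integrable (fun p : Ω' × Ω =>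
      ‖d 0 p.1 • x 0 + ∑ n ∈ range k, ε (n + 1) p.2 • x (n + 1)‖) (P'.prod P) :=
    lipschitzWith_one_norm.integrable_comp
      (((hd₀.smul_const (x 0)).comp_fst P).add (hsum.comp_snd P'))
  simp_rw [hIcc]
  rw [integral_prod _ hprod]
  simp_rw [integral_comp_add_sum_smul_eq_rademacherAverage he hεindep hrad
    (lipschitzWith_one_norm (E := B))]
  exact integral_comp_sum_smul_le_rademacherAverage hmono hle hadapt hmds hbdd
    (convexOn_norm convex_univ) lipschitzWith_one_norm x k

/-- Let `(d_n)_{n ≥ 0}` be a real-valued martingale difference sequence on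
`(Ω', P')` with `𝒜_0` trivial and `|d_n| ≤ 1` a.s., and let `(ε_n)_{n ≥ 1}` be an i.i.d.
sequence of Rademacher variables on `(Ω, P)`. Then for any Banach space `B`, any `k ≥ 1`
and any `x_0, …, x_k ∈ B`,
`∫ ‖d_0 x_0 + ∑_{n=1}^k d_n x_n‖ dP' ≤ ∫ ‖d_0 x_0 + ∑_{n=1}^k ε_n x_n‖ dP`
(the right-hand side is written on the product `Ω' × Ω` since `d_0` is constant a.s.). -/
theorem mds_dominated_by_rademacher {Ω' : Type} [mΩ' : MeasurableSpace Ω'] (P' : Measure Ω')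
    [IsProbabilityMeasure P']
    {Ω : Type} [mΩ : MeasurableSpace Ω] (P : Measure Ω) [IsProbabilityMeasure P]
    (d : ℕ → Ω' → ℝ) (𝒜 : ℕ → MeasurableSpace Ω')
    (hmono : Monotone 𝒜) (hle : ∀ n, 𝒜 n ≤ mΩ') (htriv : 𝒜 0 = ⊥)
    (hadapt : ∀ n, Measurable[𝒜 n] (d n))
    (hmds : ∀ n, P'[d (n + 1)|𝒜 n] =ᵐ[P'] 0)
    (hbdd : ∀ n, ∀ᵐ ω ∂P', |d n ω| ≤ 1)
    (ε : ℕ → Ω → ℝ) (hεmeas : ∀ n, 1 ≤ n → Measurable (ε n))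
    (hεindep : iIndepFun (fun n => ε (n + 1)) P)
    (hεdist : ∀ n, 1 ≤ n → P {ω | ε n ω = 1} = 1 / 2 ∧ P {ω | ε n ω = -1} = 1 / 2)
    (B : Type) [NormedAddCommGroup B] [NormedSpace ℝ B]
    (k : ℕ) (hk : 1 ≤ k) (x : ℕ → B) :
    ∫ ω, ‖d 0 ω • x 0 + ∑ n ∈ Finset.Icc 1 k, d n ω • x n‖ ∂P'
      ≤ ∫ p, ‖d 0 p.1 • x 0 + ∑ n ∈ Finset.Icc 1 k, ε n p.2 • x n‖ ∂(P'.prod P) :=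
  mds_dominated_by_rademacher_general (mΩ' := mΩ') P' (mΩ := mΩ) P d 𝒜 hmono hle hadapt hmds hbdd ε
    hεmeas hεindep hεdist B k x
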